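/- arXiv:2302.07757 — 2 statements merged into one kernel-verified Lean document; each statement's English description precedes it below -/
import Mathlib

section
/- For n ≥ 1 and q ≥ 2, the zero forcing number of the Hamming graph H(n,q) equals (q^n + (q−2)^n)/2. -/
open Finset

namespace ZFPaper

variable {V : Type*}

/-- Zero forcing propagation: `Forces G B v` means `v` eventually gets colored black
starting from the initially black set `B`. -/
inductive Forces (G : SimpleGraph V) (B : Set V) : V → Prop
  | init (v : V) : v ∈ B → Forces G B v
  | force (u v : V) : G.Adj u v → Forces G B u →
      (∀ w, G.Adj u w → w ≠ v → Forces G B w) → Forces G B v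

/-- `B` is a zero forcing set of `G`. -/
def IsZeroForcingSet (G : SimpleGraph V) (B : Set V) : Prop := ∀ v, Forces G B v

/-- The zero forcing number `Z(G)`. -/
noncomputable def zeroForcingNumber (G : SimpleGraph V) : ℕ :=
  sInf {m | ∃ B : Finset V, B.card = m ∧ IsZeroForcingSet G ↑B}

/-- The total zero forcing number `Z_t(G)`. -/
noncomputable def totalZeroForcingNumber (G : SimpleGraph V) : ℕ :=
  sInf {m | ∃ B : Finset V, B.card = m ∧ IsZeroForcingSet G ↑B ∧
    ∀ v ∈ B, ∃ u ∈ B, G.Adj v u}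

/-- The connected zero forcing number `Z_c(G)`. -/
noncomputable def connectedZeroForcingNumber (G : SimpleGraph V) : ℕ :=
  sInf {m | ∃ B : Finset V, B.card = m ∧ IsZeroForcingSet G ↑B ∧
    (G.induce (↑B : Set V)).Connected}

/-- The closed neighborhood of a vertex. -/
def closedNbhd (G : SimpleGraph V) (v : V) : Set V := G.neighborSet v ∪ {v}

/-- A Z-Grundy dominating sequence: each vertex has an open neighbor not yet dominated,
and at the end every vertex is dominated. -/
def IsZGrundySeq (G : SimpleGraph V) (l : List V) : Prop :=
  (∀ i : Fin l.length,
    ((G.neighborSet (l.get i)) \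
      (⋃ j : Fin l.length, ⋃ _ : (j : ℕ) < (i : ℕ), closedNbhd G (l.get j))).Nonempty) ∧
  ∀ v : V, ∃ i : Fin l.length, v ∈ closedNbhd G (l.get i)

/-- The Z-Grundy domination number `γ_gr^Z(G)`. -/
noncomputable def zGrundyNumber (G : SimpleGraph V) : ℕ :=
  sSup {m | ∃ l : List V, IsZGrundySeq G l ∧ l.length = m}

/-- The generalized Johnson graph `J_S(n,k)`. -/
def genJohnson (n k : ℕ) (S : Finset ℕ) :
    SimpleGraph {A : Finset (Fin n) // A.card = k} where
  Adj v w := v ≠ w ∧ (v.1 ∩ w.1).card ∈ S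
  symm := ⟨by
    rintro v w ⟨h1, h2⟩
    exact ⟨h1.symm, by rwa [Finset.inter_comm]⟩⟩
  loopless := ⟨by rintro v ⟨h1, -⟩; exact h1 rfl⟩

/-- The generalized Grassmann graph `J_{q,S}(n,k)` over a finite field `F` of order `q`. -/
def genGrassmann (F : Type*) [Field F] (n k : ℕ) (S : Finset ℕ) :
    SimpleGraph {W : Submodule F (Fin n → F) // Module.finrank F W = k} where
  Adj v w := v ≠ w ∧ Module.finrank F ↥(v.1 ⊓ w.1) ∈ S
  symm := ⟨by
    rintro v w ⟨h1, h2⟩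
    exact ⟨h1.symm, by rwa [inf_comm w.1 v.1]⟩⟩
  loopless := ⟨by rintro v ⟨h1, -⟩; exact h1 rfl⟩

/-- The Hamming graph `H(n,q)`. -/
def hammingGraph (n q : ℕ) : SimpleGraph (Fin n → Fin q) where
  Adj x y := hammingDist x y = 1
  symm := ⟨fun x y (h : hammingDist x y = 1) => show hammingDist y x = 1 by rwa [hammingDist_comm]⟩
  loopless := ⟨fun x (h : hammingDist x x = 1) => by rw [hammingDist_self] at h; exact absurd h (by norm_num)⟩


/-! ### Auxiliary machinery for STATEMENT 16 -/

section Aux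

lemma mem_closedNbhd {G : SimpleGraph V} {v w : V} :
    w ∈ closedNbhd G v ↔ G.Adj v w ∨ w = v := by
  simp [closedNbhd, SimpleGraph.neighborSet, or_comm]

lemma forces_of_witness (G : SimpleGraph V) (L : List (V × V))
    (hadj : ∀ p ∈ L, G.Adj p.1 p.2)
    (hpw : List.Pairwise (fun p p' => p'.2 ∉ closedNbhd G p.1) L)
    (hdisj : ∀ p ∈ L, ∀ p' ∈ L, p.1 ≠ p'.2) :
    IsZeroForcingSet G {v | ∀ p ∈ L, v ≠ p.2} := by
  set B : Set V := {v | ∀ p ∈ L, v ≠ p.2} with hBdef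
  have hpw' := List.pairwise_iff_getElem.1 hpw
  have key : ∀ i (hi : i < L.length), Forces G B (L[i].2) := by
    intro i
    induction i using Nat.strong_induction_on with
    | _ i IH =>
      intro hi
      refine Forces.force L[i].1 L[i].2 (hadj _ (L.getElem_mem hi)) ?_ ?_
      · exact Forces.init _ (fun p hp => hdisj _ (L.getElem_mem hi) p hp)
      · intro w hw hwne
        by_cases hwB : w ∈ B
        · exact Forces.init _ hwB
        · simp only [hBdef, Set.mem_setOf_eq, not_forall] at hwB
          obtain ⟨p, hp, hwp⟩ := hwB
          push_neg at hwp
          obtain ⟨j, hj, rfl⟩ := List.mem_iff_getElem.1 hp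
          rcases lt_trichotomy j i with hji | rfl | hij
          · exact hwp ▸ IH j hji hj
          · exact absurd hwp hwne
          · exact absurd (mem_closedNbhd.2 (Or.inl (hwp ▸ hw)))
              (hpw' i j hi hj hij)
  intro v
  by_cases hv : v ∈ B
  · exact Forces.init _ hv
  · simp only [hBdef, Set.mem_setOf_eq, not_forall] at hv
    obtain ⟨p, hp, hvp⟩ := hv
    push_neg at hvp
    obtain ⟨j, hj, rfl⟩ := List.mem_iff_getElem.1 hp
    exact hvp ▸ key j hj

lemma null_vec [Fintype V] {F : Type*} [Field F] (G : SimpleGraph V) (B : Set V)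
    (hB : IsZeroForcingSet G B) (M : V → V → F)
    (h0 : ∀ u w, w ∉ closedNbhd G u → M u w = 0)
    (h1 : ∀ u w, G.Adj u w → M u w ≠ 0)
    (z : V → F) (hz : ∀ u, ∑ w, M u w * z w = 0) (hzB : ∀ v ∈ B, z v = 0) :
    ∀ v, z v = 0 := by
  have main : ∀ v, Forces G B v → z v = 0 := by
    intro v hF
    induction hF with
    | init v hv => exact hzB v hv
    | force u v huv hu hnb ihu ihnb =>
      have hsum : ∑ w, M u w * z w = M u v * z v := by
        refine Finset.sum_eq_single v (fun w _ hwne => ?_) (by simp)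
        by_cases hwc : w ∈ closedNbhd G u
        · rcases mem_closedNbhd.1 hwc with hadj | rfl
          · rw [ihnb w hadj hwne, mul_zero]
          · rw [ihu, mul_zero]
        · rw [h0 u w hwc, zero_mul]
      have := (hz u).symm.trans hsum
      exact (mul_eq_zero.1 this.symm).resolve_left (h1 u v huv)
  exact fun v => main v (hB v)

end Aux

section QVecSec

structure QVec (F : Type*) [Field F] (r : ℕ) where
  v : Fin (r + 2) → F
  hv : ∀ a, v a ≠ 0
  hsum : ∑ a, v a = 1

variable {F : Type*} [Field F] {r : ℕ}

lemma qvec_exists (hchar : (2 : F) = 0) (x : F) (hx0 : x ≠ 0) (hx1 : x ≠ 1) :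
    Nonempty (QVec F r) := by
  obtain ⟨x0, x1, h0, h1, hs⟩ : ∃ x0 x1 : F, x0 ≠ 0 ∧ x1 ≠ 0 ∧
      ((r + 2 : ℕ) : F) + x0 + x1 = 1 := by
    rcases Nat.even_or_odd r with ⟨k, hk⟩ | ⟨k, hk⟩
    · refine ⟨x, x + 1, hx0, fun h => hx1 (by linear_combination h - hchar), ?_⟩
      subst hk; push_cast; linear_combination (k + 1 + x) * hchar
    · refine ⟨1, 1, one_ne_zero, one_ne_zero, ?_⟩
      subst hk; push_cast; linear_combination (k + 2) * hchar
  refine ⟨⟨fun a => if a = 0 then x0 else if a = 1 then x1 else 1, ?_, ?_⟩⟩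
  · intro a; split_ifs <;> simp [h0, h1]
  · have h01 : (0 : Fin (r+2)) ≠ 1 := by
      intro h
      have := congrArg Fin.val h
      simp [Fin.val_one] at this
    have hdecomp : ∀ a : Fin (r+2),
        (if a = 0 then x0 else if a = 1 then x1 else 1)
        = 1 + ((if a = 0 then x0 + 1 else 0) + (if a = 1 then x1 + 1 else 0)) := by
      intro a
      split_ifs with ha hb
      · exact absurd (ha ▸ hb) h01
      · linear_combination -hchar
      · linear_combination -hchar
      · simp
    calc ∑ a : Fin (r+2), (if a = 0 then x0 else if a = 1 then x1 else 1)
        = ∑ a : Fin (r+2), (1 + ((if a = 0 then x0 + 1 else 0) + (if a = 1 then x1 + 1 else 0))) := by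
          exact Finset.sum_congr rfl fun a _ => hdecomp a
      _ = (∑ _a : Fin (r+2), (1:F)) + ((∑ a : Fin (r+2), if a = 0 then x0 + 1 else 0)
            + (∑ a : Fin (r+2), if a = 1 then x1 + 1 else 0)) := by
          rw [Finset.sum_add_distrib, Finset.sum_add_distrib]
      _ = ((r + 2 : ℕ) : F) + ((x0 + 1) + (x1 + 1)) := by
          rw [Finset.sum_const, Finset.card_univ, Fintype.card_fin, nsmul_eq_mul, mul_one]
          rw [Finset.sum_ite_eq' univ (0 : Fin (r+2)) (fun _ => x0 + 1)]
          rw [Finset.sum_ite_eq' univ (1 : Fin (r+2)) (fun _ => x1 + 1)]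
          simp
      _ = 1 := by linear_combination hs + hchar

def Gm (W : QVec F r) : Fin (r + 2) → Fin (r + 2) → F := fun j a =>
  if j = 0 then 1 else (if a = 0 then W.v j else 0) + (if a = j then W.v 0 else 0)

def Hm (W : QVec F r) : Fin (r + 2) → Fin (r + 2) → F := fun a j =>
  if j = 0 then W.v a else (W.v 0)⁻¹ * W.v a + (if a = j then (W.v 0)⁻¹ else 0)

lemma sum_ite_point {M : Type*} [AddCommMonoid M] (a0 : Fin (r+2)) (f : Fin (r+2) → M) :
    ∑ b, (if b = a0 then f b else 0) = f a0 := by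
  rw [Finset.sum_ite_eq' univ a0 f]; simp

lemma Gm_zero (W : QVec F r) (a : Fin (r+2)) : Gm W 0 a = 1 := by simp [Gm]

lemma sum_v_mul_G (hchar : (2 : F) = 0) (W : QVec F r) (j : Fin (r+2)) :
    ∑ b, W.v b * Gm W j b = if j = 0 then 1 else 0 := by
  by_cases hj : j = 0
  · subst hj
    simp [Gm, W.hsum]
  · rw [if_neg hj]
    have : ∀ b : Fin (r+2), W.v b * Gm W j b
        = (if b = 0 then W.v 0 * W.v j else 0) + (if b = j then W.v j * W.v 0 else 0) := by
      intro b
      simp only [Gm, if_neg hj]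
      split_ifs with h1 h2 h2 <;> subst_vars <;> ring
    rw [Finset.sum_congr rfl fun b _ => this b, Finset.sum_add_distrib,
      sum_ite_point 0 (fun _ => W.v 0 * W.v j), sum_ite_point j (fun _ => W.v j * W.v 0)]
    linear_combination W.v 0 * W.v j * hchar

lemma sum_G_mul_H (hchar : (2 : F) = 0) (W : QVec F r) (j j' : Fin (r+2)) :
    ∑ a, Gm W j a * Hm W a j' = if j = j' then 1 else 0 := by
  have hc : (W.v 0)⁻¹ * W.v 0 = 1 := inv_mul_cancel₀ (W.hv 0)
  by_cases hj : j = 0 <;> by_cases hj' : j' = 0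
  · subst hj; subst hj'
    simp [Gm, Hm, W.hsum]
  · subst hj
    rw [if_neg (Ne.symm hj')]
    have : ∀ a : Fin (r+2), Gm W 0 a * Hm W a j'
        = (W.v 0)⁻¹ * W.v a + (if a = j' then (W.v 0)⁻¹ else 0) := by
      intro a
      rw [Gm_zero, one_mul, Hm, if_neg hj']
    rw [Finset.sum_congr rfl fun a _ => this a, Finset.sum_add_distrib, ← Finset.mul_sum,
      W.hsum, sum_ite_point j' (fun _ => (W.v 0)⁻¹)]
    linear_combination ((W.v 0)⁻¹) * hchar
  · subst hj'
    rw [if_neg hj]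
    have : ∀ a : Fin (r+2), Gm W j a * Hm W a 0
        = (if a = 0 then W.v j * W.v 0 else 0) + (if a = j then W.v 0 * W.v j else 0) := by
      intro a
      simp only [Gm, Hm, if_pos rfl, if_neg hj]
      split_ifs with h1 h2 h2 <;> subst_vars <;> ring
    rw [Finset.sum_congr rfl fun a _ => this a, Finset.sum_add_distrib,
      sum_ite_point 0 (fun _ => W.v j * W.v 0), sum_ite_point j (fun _ => W.v 0 * W.v j)]
    linear_combination (W.v j * W.v 0) * hchar
  · have : ∀ a : Fin (r+2), Gm W j a * Hm W a j'
        = (if a = 0 then W.v j * ((W.v 0)⁻¹ * W.v 0) else 0)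
          + (if a = j then W.v 0 * ((W.v 0)⁻¹ * W.v j + (if j = j' then (W.v 0)⁻¹ else 0)) else 0) := by
      intro a
      simp only [Gm, Hm, if_neg hj, if_neg hj']
      by_cases h1 : a = 0
      · subst h1
        rw [if_pos rfl, if_neg (Ne.symm hj), if_neg (Ne.symm hj'), if_pos rfl, if_neg (Ne.symm hj)]
        ring
      · by_cases h2 : a = j
        · subst h2
          rw [if_neg h1, if_pos rfl, if_neg h1, if_pos rfl]
          ring
        · rw [if_neg h1, if_neg h2, if_neg h1, if_neg h2]
          ring
    rw [Finset.sum_congr rfl fun a _ => this a, Finset.sum_add_distrib,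
      sum_ite_point 0 _, sum_ite_point j _, hc]
    have hcc : W.v 0 * (W.v 0)⁻¹ = 1 := mul_inv_cancel₀ (W.hv 0)
    split_ifs with h
    · linear_combination (W.v j) * hchar + (W.v j + 1) * hcc
    · linear_combination (W.v j) * hchar + (W.v j) * hcc

end QVecSec

section LowerBound

variable {F : Type*} [Field F] {r n : ℕ}

lemma hamming_adj_iff {q : ℕ} {x y : Fin n → Fin q} :
    (hammingGraph n q).Adj x y ↔ ∃ i, x i ≠ y i ∧ ∀ j, j ≠ i → x j = y j := by
  have hrfl : (hammingGraph n q).Adj x y ↔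
      (Finset.filter (fun i => x i ≠ y i) Finset.univ).card = 1 := Iff.rfl
  rw [hrfl, Finset.card_eq_one]
  constructor
  · rintro ⟨i, hi⟩
    refine ⟨i, ?_, ?_⟩
    · have : i ∈ Finset.filter (fun j => x j ≠ y j) Finset.univ := by
        rw [hi]; exact Finset.mem_singleton_self i
      simpa using this
    · intro j hj
      by_contra hne
      have : j ∈ Finset.filter (fun j => x j ≠ y j) Finset.univ := by simpa using hne
      rw [hi] at this
      exact hj (Finset.mem_singleton.1 this)
  · rintro ⟨i, hi, hrest⟩
    refine ⟨i, ?_⟩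
    ext j
    simp only [Finset.mem_filter, Finset.mem_univ, true_and, Finset.mem_singleton]
    constructor
    · intro hj; by_contra hne; exact hj (hrest j hne)
    · rintro rfl; exact hi

/-- the matrix with closed-neighborhood support used for the lower bound -/
def Mmat (W : QVec F r) (x y : Fin n → Fin (r+2)) : F :=
  ∑ i, if (∀ j, j ≠ i → y j = x j) then W.v (y i) else 0

lemma Mmat_zero (W : QVec F r) {x y : Fin n → Fin (r+2)}
    (h : y ∉ closedNbhd (hammingGraph n (r+2)) x) : Mmat W x y = 0 := by
  rw [Mmat]
  refine Finset.sum_eq_zero fun i _ => ?_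
  rw [if_neg]
  intro hcond
  by_cases hyi : y i = x i
  · exact h (mem_closedNbhd.2 (Or.inr (funext fun j => by
      by_cases hj : j = i
      · exact hj ▸ hyi
      · exact hcond j hj)))
  · exact h (mem_closedNbhd.2 (Or.inl (hamming_adj_iff.2
      ⟨i, fun hh => hyi hh.symm, fun j hj => (hcond j hj).symm⟩)))

lemma Mmat_ne_zero (W : QVec F r) {x y : Fin n → Fin (r+2)}
    (h : (hammingGraph n (r+2)).Adj x y) : Mmat W x y ≠ 0 := by
  obtain ⟨i, hi, hrest⟩ := hamming_adj_iff.1 h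
  have : Mmat W x y = if (∀ j, j ≠ i → y j = x j) then W.v (y i) else 0 := by
    rw [Mmat]
    refine Finset.sum_eq_single i (fun i' _ hne => ?_) (fun hh => absurd (Finset.mem_univ i) hh)
    rw [if_neg]
    intro hcond
    exact hi ((hcond i (Ne.symm hne)).symm)
  rw [this, if_pos (fun j hj => (hrest j hj).symm)]
  exact W.hv _
  
lemma Mmat_row (W : QVec F r) (x : Fin n → Fin (r+2)) (zz : (Fin n → Fin (r+2)) → F) :
    ∑ y, Mmat W x y * zz y = ∑ i, ∑ b, W.v b * zz (Function.update x i b) := by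
  simp only [Mmat, Finset.sum_mul]
  rw [Finset.sum_comm]
  refine Finset.sum_congr rfl fun i _ => ?_
  have h1 : ∀ y : Fin n → Fin (r+2),
      (if (∀ j, j ≠ i → y j = x j) then W.v (y i) else 0) * zz y
      = if (∀ j, j ≠ i → y j = x j) then W.v (y i) * zz y else 0 := by
    intro y
    split_ifs
    · rfl
    · exact zero_mul _
  rw [Finset.sum_congr rfl fun y _ => h1 y, ← Finset.sum_filter]
  have leftinv : ∀ y ∈ Finset.filter (fun y => (∀ j, j ≠ i → y j = x j)) Finset.univ,
      Function.update x i (y i) = y := by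
    intro y hy
    simp only [Finset.mem_filter, Finset.mem_univ, true_and] at hy
    funext j
    by_cases hj : j = i
    · subst hj; rw [Function.update_self]
    · rw [Function.update_of_ne hj]; exact (hy j hj).symm
  refine Finset.sum_nbij' (fun y => y i) (fun b => Function.update x i b) ?_ ?_ ?_ ?_ ?_
  · intro a _; exact Finset.mem_univ _
  · intro b _
    simp only [Finset.mem_filter, Finset.mem_univ, true_and]
    intro j hj
    exact Function.update_of_ne hj b x
  · intro y hy
    exact leftinv y hy
  · intro b _
    exact Function.update_self i b x
  · intro y hy
    rw [leftinv y hy]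

def zfun (W : QVec F r) (w : Fin n → Fin (r+2)) : (Fin n → Fin (r+2)) → F :=
  fun y => ∏ i, Gm W (w i) (y i)

def zeroCount (w : Fin n → Fin (r+2)) : ℕ := (Finset.filter (fun i => w i = 0) Finset.univ).card

lemma zfun_ker (hchar : (2 : F) = 0) (W : QVec F r) {w : Fin n → Fin (r+2)}
    (hw : Even (zeroCount w)) (x : Fin n → Fin (r+2)) :
    ∑ y, Mmat W x y * zfun W w y = 0 := by
  rw [Mmat_row]
  have step : ∀ (i : Fin n) (b : Fin (r+2)), zfun W w (Function.update x i b)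
      = Gm W (w i) b * ∏ j ∈ Finset.univ \ {i}, Gm W (w j) (x j) := by
    intro i b
    rw [zfun, Finset.prod_eq_mul_prod_sdiff_singleton_of_mem (Finset.mem_univ i)]
    congr 1
    · rw [Function.update_self]
    · refine Finset.prod_congr rfl fun j hj => ?_
      have hj' : j ≠ i := by
        have := (Finset.mem_sdiff.1 hj).2
        simpa using this
      rw [Function.update_of_ne hj']
  calc ∑ i, ∑ b, W.v b * zfun W w (Function.update x i b)
      = ∑ i, (∑ b, W.v b * Gm W (w i) b) * (∏ j ∈ Finset.univ \ {i}, Gm W (w j) (x j)) := by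
        refine Finset.sum_congr rfl fun i _ => ?_
        rw [Finset.sum_mul]
        refine Finset.sum_congr rfl fun b _ => ?_
        rw [step i b, mul_assoc]
    _ = ∑ i, (if w i = 0 then (1:F) else 0) * (∏ j ∈ Finset.univ \ {i}, Gm W (w j) (x j)) := by
        refine Finset.sum_congr rfl fun i _ => ?_
        rw [sum_v_mul_G hchar]
    _ = ∑ i ∈ Finset.filter (fun i => w i = 0) Finset.univ,
          (∏ j ∈ Finset.univ \ {i}, Gm W (w j) (x j)) := by
        rw [Finset.sum_filter]
        refine Finset.sum_congr rfl fun i _ => ?_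
        split_ifs
        · rw [one_mul]
        · rw [zero_mul]
    _ = ∑ _i ∈ Finset.filter (fun i => w i = 0) Finset.univ, (∏ j, Gm W (w j) (x j)) := by
        refine Finset.sum_congr rfl fun i hi => ?_
        have hwi : w i = 0 := (Finset.mem_filter.1 hi).2
        rw [Finset.prod_eq_mul_prod_sdiff_singleton_of_mem (Finset.mem_univ i)
          (fun j => Gm W (w j) (x j)), hwi, Gm_zero, one_mul]
    _ = 0 := by
        rw [Finset.sum_const]
        obtain ⟨k, hk⟩ := hw
        have hcard : (Finset.filter (fun i => w i = 0) Finset.univ).card = k + k := hk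
        rw [hcard, nsmul_eq_mul]
        push_cast
        linear_combination (k : F) * (∏ j, Gm W (w j) (x j)) * hchar

/-- evaluation of the dual functional: picks out coefficients -/
lemma zfun_dual (hchar : (2 : F) = 0) (W : QVec F r) (S : Finset (Fin n → Fin (r+2)))
    (g : (Fin n → Fin (r+2)) → F)
    (hzero : ∀ y, ∑ w ∈ S, g w * zfun W w y = 0) : ∀ w' ∈ S, g w' = 0 := by
  intro w' hw'
  have h1 : ∑ y, (∏ i, Hm W (y i) (w' i)) * (∑ w ∈ S, g w * zfun W w y) = 0 := by
    simp [hzero]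
  have h2 : ∑ y : Fin n → Fin (r+2), (∏ i, Hm W (y i) (w' i)) * (∑ w ∈ S, g w * zfun W w y)
      = ∑ w ∈ S, g w * (∑ y : Fin n → Fin (r+2), ∏ i, (Gm W (w i) (y i) * Hm W (y i) (w' i))) := by
    calc ∑ y : Fin n → Fin (r+2), (∏ i, Hm W (y i) (w' i)) * (∑ w ∈ S, g w * zfun W w y)
        = ∑ y : Fin n → Fin (r+2), ∑ w ∈ S, g w * ((∏ i, Hm W (y i) (w' i)) * zfun W w y) := by
          refine Finset.sum_congr rfl fun y _ => ?_
          rw [Finset.mul_sum]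
          refine Finset.sum_congr rfl fun w _ => ?_
          ring
      _ = ∑ w ∈ S, ∑ y : Fin n → Fin (r+2), g w * ((∏ i, Hm W (y i) (w' i)) * zfun W w y) :=
          Finset.sum_comm
      _ = ∑ w ∈ S, g w * (∑ y : Fin n → Fin (r+2), ∏ i, (Gm W (w i) (y i) * Hm W (y i) (w' i))) := by
          refine Finset.sum_congr rfl fun w _ => ?_
          rw [Finset.mul_sum]
          refine Finset.sum_congr rfl fun y _ => ?_
          rw [zfun, Finset.prod_mul_distrib]
          ring
  have h3 : ∀ w : Fin n → Fin (r+2),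
      (∑ y : Fin n → Fin (r+2), ∏ i, (Gm W (w i) (y i) * Hm W (y i) (w' i)))
      = if w = w' then 1 else 0 := by
    intro w
    have h4 : (∑ y : Fin n → Fin (r+2), ∏ i, (Gm W (w i) (y i) * Hm W (y i) (w' i)))
        = ∏ i, (∑ a, Gm W (w i) a * Hm W a (w' i)) := by
      rw [Finset.prod_univ_sum (fun _ => Finset.univ)
        (fun i a => Gm W (w i) a * Hm W a (w' i)), Fintype.piFinset_univ]
    rw [h4]
    by_cases hww : w = w'
    · subst hww
      rw [if_pos rfl]
      refine Finset.prod_eq_one fun i _ => ?_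
      rw [sum_G_mul_H hchar, if_pos rfl]
    · rw [if_neg hww]
      obtain ⟨i, hi⟩ := Function.ne_iff.1 hww
      refine Finset.prod_eq_zero (Finset.mem_univ i) ?_
      rw [sum_G_mul_H hchar, if_neg hi]
  rw [h2] at h1
  have h5 : ∑ w ∈ S, g w * (∑ y : Fin n → Fin (r+2), ∏ i, (Gm W (w i) (y i) * Hm W (y i) (w' i)))
      = ∑ w ∈ S, (if w = w' then g w else 0) := by
    refine Finset.sum_congr rfl fun w _ => ?_
    rw [h3]
    split_ifs
    · rw [mul_one]
    · rw [mul_zero]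
  rw [h5, Finset.sum_ite_eq' S w' g, if_pos hw'] at h1
  exact h1

/-- cardinality of the even-zero-count index set -/
lemma evenZero_card (hq : True) :
    2 * (Finset.filter (fun w : Fin n → Fin (r+2) => Even (zeroCount w)) Finset.univ).card
      = (r+2)^n + r^n := by
  have key : ((Finset.filter (fun w : Fin n → Fin (r+2) => Even (zeroCount w)) Finset.univ).card : ℤ)
      - ((Finset.filter (fun w : Fin n → Fin (r+2) => ¬ Even (zeroCount w)) Finset.univ).card : ℤ)
      = (r : ℤ)^n := by
    have h1 : ∀ w : Fin n → Fin (r+2), ((-1 : ℤ))^(zeroCount w)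
        = ∏ i, (if w i = 0 then (-1 : ℤ) else 1) := by
      intro w
      rw [← Finset.prod_filter_mul_prod_filter_not Finset.univ (fun i => w i = 0)]
      rw [Finset.prod_congr rfl (fun i hi => if_pos (Finset.mem_filter.1 hi).2),
        Finset.prod_congr (rfl : Finset.filter (fun i => ¬ w i = 0) Finset.univ = _)
          (fun i hi => if_neg (Finset.mem_filter.1 hi).2),
        Finset.prod_const, Finset.prod_const, one_pow, mul_one, zeroCount]
    have h2 : ∑ w : Fin n → Fin (r+2), ((-1 : ℤ))^(zeroCount w) = (r : ℤ)^n := by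
      rw [Finset.sum_congr rfl fun w _ => h1 w]
      rw [← Fintype.piFinset_univ, ← Finset.prod_univ_sum (fun _ => Finset.univ)
        (fun _ a => if a = 0 then (-1 : ℤ) else 1)]
      have : ∀ i : Fin n, (∑ a : Fin (r+2), if a = 0 then (-1:ℤ) else 1) = (r : ℤ) := by
        intro i
        have hdec : ∀ a : Fin (r+2), (if a = 0 then (-1:ℤ) else 1)
            = 1 + (if a = 0 then (-2 : ℤ) else 0) := by
          intro a; split_ifs <;> ring
        rw [Finset.sum_congr rfl fun a _ => hdec a, Finset.sum_add_distrib,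
          Finset.sum_const, Finset.card_univ, Fintype.card_fin,
          Finset.sum_ite_eq' Finset.univ (0 : Fin (r+2)) (fun _ => (-2:ℤ))]
        simp
      rw [Finset.prod_congr rfl fun i _ => this i, Finset.prod_const, Finset.card_univ,
        Fintype.card_fin]
    rw [← h2, ← Finset.sum_filter_add_sum_filter_not Finset.univ
      (fun w => Even (zeroCount w)) (fun w => ((-1:ℤ))^(zeroCount w))]
    rw [Finset.sum_congr rfl (fun w hw => (Finset.mem_filter.1 hw).2.neg_one_pow),
      Finset.sum_congr (rfl : Finset.filter (fun w => ¬ Even (zeroCount w)) Finset.univ = _)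
        (fun w hw => (Nat.not_even_iff_odd.1 (Finset.mem_filter.1 hw).2).neg_one_pow),
      Finset.sum_const, Finset.sum_const]
    simp
    ring
  have htot : (Finset.filter (fun w : Fin n → Fin (r+2) => Even (zeroCount w)) Finset.univ).card
      + (Finset.filter (fun w : Fin n → Fin (r+2) => ¬ Even (zeroCount w)) Finset.univ).card
      = (r+2)^n := by
    rw [Finset.card_filter_add_card_filter_not, Finset.card_univ]
    simp [Fintype.card_fin]
  have hr : ((r:ℤ))^n = ((r^n : ℕ) : ℤ) := by push_cast; ring
  rw [hr] at key
  generalize hP : (r+2)^n = P at htot ⊢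
  generalize hQ : r^n = Q at key ⊢
  omega

end LowerBound

section LowerBoundMain

lemma galois_x : ∃ x : GaloisField 2 2, x ≠ 0 ∧ x ≠ 1 := by
  by_contra hcon
  push_neg at hcon
  have hsurj : Function.Surjective (fun b : Bool => if b then (1 : GaloisField 2 2) else 0) := by
    intro y
    by_cases hy : y = 0
    · exact ⟨false, by simp [hy]⟩
    · exact ⟨true, by simp [(hcon y hy).symm]⟩
  have hle : Nat.card (GaloisField 2 2) ≤ Nat.card Bool :=
    Nat.card_le_card_of_surjective _ hsurj
  rw [GaloisField.card 2 2 (by norm_num), Nat.card_eq_fintype_card] at hle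
  simp at hle

lemma hamming_lower_bound {r n : ℕ} (B : Finset (Fin n → Fin (r+2)))
    (hB : IsZeroForcingSet (hammingGraph n (r+2)) (↑B : Set (Fin n → Fin (r+2)))) :
    (r+2)^n + r^n ≤ 2 * B.card := by
  classical
  set F := GaloisField 2 2
  have hchar : (2 : F) = 0 := by
    have : ((2 : ℕ) : F) = 0 := CharP.cast_eq_zero F 2
    simpa using this
  obtain ⟨x, hx0, hx1⟩ := galois_x
  obtain ⟨W⟩ : Nonempty (QVec F r) := qvec_exists hchar x hx0 hx1
  set T : Finset (Fin n → Fin (r+2)) :=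
    Finset.filter (fun w => Even (zeroCount w)) Finset.univ with hT
  have hindep : LinearIndependent F
      (fun (w : {w // w ∈ T}) => (fun b : {b // b ∈ B} => zfun W w.1 b.1)) := by
    rw [Fintype.linearIndependent_iff]
    intro g hg
    set gg : (Fin n → Fin (r+2)) → F := fun w => if h : w ∈ T then g ⟨w, h⟩ else 0 with hgg
    set zz : (Fin n → Fin (r+2)) → F := fun y => ∑ w ∈ T, gg w * zfun W w y with hzz
    have hzB : ∀ y ∈ (↑B : Set (Fin n → Fin (r+2))), zz y = 0 := by
      intro y hy
      have hy' := congrFun hg (⟨y, hy⟩ : {b // b ∈ B})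
      rw [Finset.sum_apply] at hy'
      simp only [Pi.zero_apply] at hy'
      rw [hzz]
      dsimp only
      rw [← Finset.sum_coe_sort T (fun w => gg w * zfun W w y), ← hy']
      refine Finset.sum_congr rfl fun w _ => ?_
      simp only [Pi.smul_apply, smul_eq_mul, hgg]
      rw [dif_pos w.2]
    have hker : ∀ u, ∑ y, Mmat W u y * zz y = 0 := by
      intro u
      have hswap : ∑ y, Mmat W u y * zz y
          = ∑ w ∈ T, gg w * ∑ y, Mmat W u y * zfun W w y := by
        calc ∑ y, Mmat W u y * zz y
            = ∑ y, ∑ w ∈ T, gg w * (Mmat W u y * zfun W w y) := by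
              refine Finset.sum_congr rfl fun y _ => ?_
              rw [hzz]
              dsimp only
              rw [Finset.mul_sum]
              refine Finset.sum_congr rfl fun w _ => ?_
              ring
          _ = ∑ w ∈ T, ∑ y, gg w * (Mmat W u y * zfun W w y) := Finset.sum_comm
          _ = ∑ w ∈ T, gg w * ∑ y, Mmat W u y * zfun W w y := by
              refine Finset.sum_congr rfl fun w _ => ?_
              rw [Finset.mul_sum]
      rw [hswap]
      refine Finset.sum_eq_zero fun w hw => ?_
      rw [zfun_ker hchar W ((Finset.mem_filter.1 hw).2) u, mul_zero]
    have hzero : ∀ y, zz y = 0 :=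
      null_vec (hammingGraph n (r+2)) _ hB (Mmat W)
        (fun u w h => Mmat_zero W h) (fun u w h => Mmat_ne_zero W h) zz hker hzB
    intro w'
    have := zfun_dual hchar W T gg hzero w'.1 w'.2
    rw [hgg] at this
    simpa [dif_pos w'.2] using this
  have hcard : Fintype.card {w // w ∈ T} ≤ Fintype.card {b // b ∈ B} := by
    have h1 := hindep.fintype_card_le_finrank
    rwa [Module.finrank_pi] at h1
  rw [Fintype.card_coe, Fintype.card_coe] at hcard
  have heven := evenZero_card (n := n) (r := r) trivial
  rw [← hT] at heven
  rw [← heven]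
  omega

end LowerBoundMain

section UpperBound

lemma hammingDist_cons {q n : ℕ} (b b' : Fin q) (x y : Fin n → Fin q) :
    hammingDist (Fin.cons b x) (Fin.cons b' y : Fin (n+1) → Fin q)
      = (if b = b' then 0 else 1) + hammingDist x y := by
  set X : Fin (n+1) → Fin q := Fin.cons b x with hX
  set Y : Fin (n+1) → Fin q := Fin.cons b' y with hY
  have h1 : hammingDist X Y = ∑ i : Fin (n+1), if X i ≠ Y i then 1 else 0 :=
    Finset.card_filter _ _
  have h2 : hammingDist x y = ∑ i : Fin n, if x i ≠ y i then 1 else 0 :=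
    Finset.card_filter _ _
  rw [h1, Fin.sum_univ_succ, h2, hX, hY]
  congr 1
  all_goals first
    | (simp only [Fin.cons_zero]
       by_cases h : b = b' <;> simp [h])
    | (refine Finset.sum_congr rfl fun i _ => ?_
       simp only [Fin.cons_succ])

lemma mem_closedNbhd_hamming {q n : ℕ} {x y : Fin n → Fin q} :
    y ∈ closedNbhd (hammingGraph n q) x ↔ hammingDist x y ≤ 1 := by
  rw [mem_closedNbhd]
  have h1 : (hammingGraph n q).Adj x y ↔ hammingDist x y = 1 := Iff.rfl
  have h2 : (y = x) ↔ hammingDist x y = 0 := by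
    rw [hammingDist_eq_zero, eq_comm]
  rw [h1, h2]
  omega

lemma sum_map_length_const {α β : Type*} (l : List α) (c : ℕ) (f : α → List β)
    (h : ∀ a ∈ l, (f a).length = c) : (List.map (List.length ∘ f) l).sum = l.length * c := by
  induction l with
  | nil => simp
  | cons a t ih =>
    simp only [List.map_cons, List.sum_cons, List.length_cons, Function.comp_apply]
    rw [h a List.mem_cons_self, ih (fun b hb => h b (List.mem_cons_of_mem a hb))]
    ring

lemma witness_exists (r : ℕ) : ∀ n, ∃ L : List ((Fin n → Fin (r+2)) × (Fin n → Fin (r+2))),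
    (∀ p ∈ L, (hammingGraph n (r+2)).Adj p.1 p.2) ∧
    List.Pairwise (fun p p' => p'.2 ∉ closedNbhd (hammingGraph n (r+2)) p.1) L ∧
    (∀ p ∈ L, ∀ p' ∈ L, p.1 ≠ p'.2) ∧
    2 * L.length + r^n = (r+2)^n := by
  intro n
  induction n with
  | zero =>
    exact ⟨[], by simp, by simp, by simp, by simp⟩
  | succ n IH =>
    classical
    obtain ⟨L, hadj, hpw, hdisj, hlen⟩ := IH
    set lst : Fin (r+2) := Fin.last (r+1) with hlst
    have hlst0 : lst ≠ 0 := by simp [hlst, Fin.ext_iff]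
    have hcastlst : ∀ a : Fin (r+1), a.castSucc ≠ lst := fun a =>
      Fin.ne_of_lt (Fin.castSucc_lt_last a)
    set Pl : Finset (Fin n → Fin (r+2)) := (L.map Prod.fst).toFinset with hPl
    set Ul : Finset (Fin n → Fin (r+2)) := (L.map Prod.snd).toFinset with hUl
    set Rest : Finset (Fin n → Fin (r+2)) := Finset.univ \ (Pl ∪ Ul) with hRest
    -- dist ≥ 2 reformulation of the pairwise condition
    have hdist2 : ∀ (p p' : (Fin n → Fin (r+2)) × (Fin n → Fin (r+2))), p ∈ L → p' ∈ L →
        (p'.2 ∉ closedNbhd (hammingGraph n (r+2)) p.1) → 2 ≤ hammingDist p.1 p'.2 := by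
      intro p p' _ _ h
      have := mem_closedNbhd_hamming.not.1 h
      omega
    -- membership in Pl/Ul
    have hmemPl : ∀ w, w ∈ Pl ↔ ∃ p ∈ L, p.1 = w := by
      intro w; simp [hPl, List.mem_map]
    have hmemUl : ∀ w, w ∈ Ul ↔ ∃ p ∈ L, p.2 = w := by
      intro w; simp [hUl, List.mem_map]
    -- nodup of players and privates
    have hPlnd : (L.map Prod.fst).Nodup := by
      rw [List.Nodup, List.pairwise_map]
      refine hpw.imp_of_mem ?_
      intro p p' hp hp' hR heq
      exact hR (mem_closedNbhd.2 (Or.inl (heq ▸ hadj p' hp')))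
    have hUlnd : (L.map Prod.snd).Nodup := by
      rw [List.Nodup, List.pairwise_map]
      refine hpw.imp_of_mem ?_
      intro p p' hp hp' hR heq
      exact hR (mem_closedNbhd.2 (Or.inl (heq ▸ hadj p hp)))
    have hPU : Disjoint Pl Ul := by
      rw [Finset.disjoint_left]
      intro w hwP hwU
      obtain ⟨p, hp, hp1⟩ := (hmemPl w).1 hwP
      obtain ⟨p', hp', hp2⟩ := (hmemUl w).1 hwU
      exact hdisj p hp p' hp' (hp1.trans hp2.symm)
    have hPlcard : Pl.card = L.length := by
      rw [hPl, List.card_toFinset, hPlnd.dedup, List.length_map]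
    have hUlcard : Ul.card = L.length := by
      rw [hUl, List.card_toFinset, hUlnd.dedup, List.length_map]
    have hRestcard : Rest.card + 2 * L.length = (r+2)^n := by
      rw [hRest, Finset.card_sdiff_of_subset (Finset.subset_univ _), Finset.card_union_of_disjoint hPU,
        hPlcard, hUlcard, Finset.card_univ, Fintype.card_fun, Fintype.card_fin, Fintype.card_fin]
      omega
    -- the three phases
    set P1 : List ((Fin (n+1) → Fin (r+2)) × (Fin (n+1) → Fin (r+2))) :=
      (List.finRange (r+1)).flatMap (fun a => L.map
        (fun p => (Fin.cons a.castSucc p.1, Fin.cons a.castSucc p.2))) with hP1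
    set P2A : List ((Fin (n+1) → Fin (r+2)) × (Fin (n+1) → Fin (r+2))) :=
      Rest.toList.map (fun w => (Fin.cons 0 w, Fin.cons lst w)) with hP2A
    set P2B : List ((Fin (n+1) → Fin (r+2)) × (Fin (n+1) → Fin (r+2))) :=
      L.map (fun p => (Fin.cons lst p.1, Fin.cons lst p.2)) with hP2B
    -- characterize memberships
    have hmem1 : ∀ p, p ∈ P1 ↔ ∃ a : Fin (r+1), ∃ p0 ∈ L,
        p = (Fin.cons a.castSucc p0.1, Fin.cons a.castSucc p0.2) := by
      intro p
      rw [hP1, List.mem_flatMap]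
      constructor
      · rintro ⟨a, -, hmap⟩
        rw [List.mem_map] at hmap
        obtain ⟨p0, hp0, rfl⟩ := hmap
        exact ⟨a, p0, hp0, rfl⟩
      · rintro ⟨a, p0, hp0, rfl⟩
        exact ⟨a, List.mem_finRange a, List.mem_map.2 ⟨p0, hp0, rfl⟩⟩
    have hmem2A : ∀ p, p ∈ P2A ↔ ∃ w ∈ Rest, p = (Fin.cons 0 w, Fin.cons lst w) := by
      intro p
      rw [hP2A, List.mem_map]
      constructor
      · rintro ⟨w, hw, rfl⟩
        exact ⟨w, Finset.mem_toList.1 hw, rfl⟩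
      · rintro ⟨w, hw, rfl⟩
        exact ⟨w, Finset.mem_toList.2 hw, rfl⟩
    have hmem2B : ∀ p, p ∈ P2B ↔ ∃ p0 ∈ L, p = (Fin.cons lst p0.1, Fin.cons lst p0.2) := by
      intro p
      rw [hP2B, List.mem_map]
      constructor
      · rintro ⟨p0, hp0, rfl⟩
        exact ⟨p0, hp0, rfl⟩
      · rintro ⟨p0, hp0, rfl⟩
        exact ⟨p0, hp0, rfl⟩
    refine ⟨P1 ++ P2A ++ P2B, ?_, ?_, ?_, ?_⟩
    · -- adjacency
      intro p hp
      rcases List.mem_append.1 hp with hp' | hpB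
      · rcases List.mem_append.1 hp' with hp1 | hp2
        · obtain ⟨a, p0, hp0, rfl⟩ := (hmem1 _).1 hp1
          show hammingDist _ _ = 1
          rw [hammingDist_cons, if_pos rfl, zero_add]
          exact hadj p0 hp0
        · obtain ⟨w, hw, rfl⟩ := (hmem2A _).1 hp2
          show hammingDist _ _ = 1
          rw [hammingDist_cons, if_neg (Ne.symm hlst0), hammingDist_self]
      · obtain ⟨p0, hp0, rfl⟩ := (hmem2B _).1 hpB
        show hammingDist _ _ = 1
        rw [hammingDist_cons, if_pos rfl, zero_add]
        exact hadj p0 hp0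
    · -- pairwise condition
      have notmem : ∀ (u x : Fin (n+1) → Fin (r+2)), 2 ≤ hammingDist x u →
          u ∉ closedNbhd (hammingGraph (n+1) (r+2)) x := by
        intro u x h hmem
        have := mem_closedNbhd_hamming.1 hmem
        omega
      rw [List.pairwise_append]
      refine ⟨?_, ?_, ?_⟩
      · -- within P1 ++ P2A
        rw [List.pairwise_append]
        refine ⟨?_, ?_, ?_⟩
        · -- within P1
          rw [hP1, List.pairwise_flatMap]
          constructor
          · intro a _
            rw [List.pairwise_map]
            refine hpw.imp_of_mem ?_
            intro p p' hp hp' hR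
            apply notmem
            rw [hammingDist_cons, if_pos rfl, zero_add]
            exact hdist2 p p' hp hp' hR
          · have hnd : (List.finRange (r+1)).Pairwise (· ≠ ·) := (List.nodup_finRange (r+1))
            refine hnd.imp_of_mem ?_
            intro a a' _ _ hne p hp p' hp'
            simp only [List.mem_map] at hp hp'
            obtain ⟨p0, hp0, rfl⟩ := hp
            obtain ⟨p0', hp0', rfl⟩ := hp'
            apply notmem
            rw [hammingDist_cons, if_neg (fun h => hne (Fin.castSucc_injective _ h))]
            have hne2 : p0.1 ≠ p0'.2 := hdisj p0 hp0 p0' hp0'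
            have : 1 ≤ hammingDist p0.1 p0'.2 := by
              rcases Nat.eq_zero_or_pos (hammingDist p0.1 p0'.2) with h0 | h1
              · exact absurd (hammingDist_eq_zero.1 h0) hne2
              · exact h1
            omega
        · -- within P2A
          rw [hP2A, List.pairwise_map]
          have hnd : Rest.toList.Pairwise (· ≠ ·) := Rest.nodup_toList
          refine hnd.imp_of_mem ?_
          intro w w' _ _ hne
          apply notmem
          rw [hammingDist_cons, if_neg (Ne.symm hlst0)]
          have : 1 ≤ hammingDist w w' := by
            rcases Nat.eq_zero_or_pos (hammingDist w w') with h0 | h1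
            · exact absurd (hammingDist_eq_zero.1 h0) hne
            · exact h1
          omega
        · -- cross P1 → P2A
          intro p hp1 p' hpa
          obtain ⟨a, p0, hp0, rfl⟩ := (hmem1 _).1 hp1
          obtain ⟨w, hw, rfl⟩ := (hmem2A _).1 hpa
          apply notmem
          rw [hammingDist_cons, if_neg (hcastlst a)]
          have hwP : w ∉ Pl := by
            rw [hRest, Finset.mem_sdiff] at hw
            exact fun hc => hw.2 (Finset.mem_union.2 (Or.inl hc))
          have hne : p0.1 ≠ w := fun h => hwP ((hmemPl w).2 ⟨p0, hp0, h⟩)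
          have : 1 ≤ hammingDist p0.1 w := by
            rcases Nat.eq_zero_or_pos (hammingDist p0.1 w) with h0 | h1
            · exact absurd (hammingDist_eq_zero.1 h0) hne
            · exact h1
          omega
      · -- within P2B
        rw [hP2B, List.pairwise_map]
        refine hpw.imp_of_mem ?_
        intro p p' hp hp' hR
        apply notmem
        rw [hammingDist_cons, if_pos rfl, zero_add]
        exact hdist2 p p' hp hp' hR
      · -- cross (P1 ++ P2A) → P2B
        intro p hp12 p' hpb
        obtain ⟨p0', hp0', rfl⟩ := (hmem2B _).1 hpb
        rcases List.mem_append.1 hp12 with hp1 | hpa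
        · obtain ⟨a, p0, hp0, rfl⟩ := (hmem1 _).1 hp1
          apply notmem
          rw [hammingDist_cons, if_neg (hcastlst a)]
          have hne : p0.1 ≠ p0'.2 := hdisj p0 hp0 p0' hp0'
          have : 1 ≤ hammingDist p0.1 p0'.2 := by
            rcases Nat.eq_zero_or_pos (hammingDist p0.1 p0'.2) with h0 | h1
            · exact absurd (hammingDist_eq_zero.1 h0) hne
            · exact h1
          omega
        · obtain ⟨w, hw, rfl⟩ := (hmem2A _).1 hpa
          apply notmem
          rw [hammingDist_cons, if_neg (Ne.symm hlst0)]
          have hwU : w ∉ Ul := by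
            rw [hRest, Finset.mem_sdiff] at hw
            exact fun hc => hw.2 (Finset.mem_union.2 (Or.inr hc))
          have hne : w ≠ p0'.2 := fun h => hwU ((hmemUl w).2 ⟨p0', hp0', h.symm⟩)
          have : 1 ≤ hammingDist w p0'.2 := by
            rcases Nat.eq_zero_or_pos (hammingDist w p0'.2) with h0 | h1
            · exact absurd (hammingDist_eq_zero.1 h0) hne
            · exact h1
          omega
    · -- disjointness of players and privates
      intro p hp p' hp'
      have hsplit : ∀ pp, pp ∈ P1 ++ P2A ++ P2B →
          (∃ a : Fin (r+1), ∃ p0 ∈ L, pp = (Fin.cons a.castSucc p0.1, Fin.cons a.castSucc p0.2))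
          ∨ (∃ w ∈ Rest, pp = (Fin.cons 0 w, Fin.cons lst w))
          ∨ (∃ p0 ∈ L, pp = (Fin.cons lst p0.1, Fin.cons lst p0.2)) := by
        intro pp hpp
        rcases List.mem_append.1 hpp with h' | hB
        · rcases List.mem_append.1 h' with h1 | h2
          · exact Or.inl ((hmem1 _).1 h1)
          · exact Or.inr (Or.inl ((hmem2A _).1 h2))
        · exact Or.inr (Or.inr ((hmem2B _).1 hB))
      rcases hsplit p hp with ⟨a, p0, hp0, rfl⟩ | ⟨w, hw, rfl⟩ | ⟨p0, hp0, rfl⟩ <;>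
        rcases hsplit p' hp' with ⟨a', p0', hp0', rfl⟩ | ⟨w', hw', rfl⟩ | ⟨p0', hp0', rfl⟩ <;>
        intro hcons <;> dsimp only at hcons
      · exact absurd ((Fin.cons_inj.1 hcons).2) (hdisj p0 hp0 p0' hp0')
      · exact absurd ((Fin.cons_inj.1 hcons).1) (hcastlst a)
      · exact absurd ((Fin.cons_inj.1 hcons).1) (hcastlst a)
      · -- P2A player vs P1 private : layer 0 = castSucc a' possible only if a' = 0
        have h1 := (Fin.cons_inj.1 hcons).1
        have h2 := (Fin.cons_inj.1 hcons).2
        have hwU : w ∉ Ul := by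
          rw [hRest, Finset.mem_sdiff] at hw
          exact fun hc => hw.2 (Finset.mem_union.2 (Or.inr hc))
        exact hwU ((hmemUl w).2 ⟨p0', hp0', h2.symm⟩)
      · exact absurd ((Fin.cons_inj.1 hcons).1) hlst0.symm
      · exact absurd ((Fin.cons_inj.1 hcons).1) hlst0.symm
      · exact absurd ((Fin.cons_inj.1 hcons).1) (fun h => (hcastlst a') h.symm)
      · -- P2B player vs P2A private
        have h2 := (Fin.cons_inj.1 hcons).2
        have hwP : w' ∉ Pl := by
          rw [hRest, Finset.mem_sdiff] at hw'
          exact fun hc => hw'.2 (Finset.mem_union.2 (Or.inl hc))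
        exact hwP ((hmemPl w').2 ⟨p0, hp0, h2⟩)
      · exact absurd ((Fin.cons_inj.1 hcons).2) (hdisj p0 hp0 p0' hp0')
    · -- length
      have hL1 : P1.length = (r+1) * L.length := by
        rw [hP1, List.length_flatMap]
        exact (sum_map_length_const _ L.length
          (fun a : Fin (r+1) => L.map (fun p => ((Fin.cons a.castSucc p.1 : Fin (n+1) → Fin (r+2)),
            (Fin.cons a.castSucc p.2 : Fin (n+1) → Fin (r+2)))))
          (fun a _ => List.length_map _)).trans (by rw [List.length_finRange])
      have hL2A : P2A.length = Rest.card := by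
        rw [hP2A, List.length_map, Finset.length_toList]
      have hL2B : P2B.length = L.length := by
        rw [hP2B, List.length_map]
      rw [List.length_append, List.length_append, hL1, hL2A, hL2B]
      have e1 : 2 * L.length + r^n = (r+2)^n := hlen
      have e2 : Rest.card + 2 * L.length = (r+2)^n := hRestcard
      rw [pow_succ, pow_succ]
      zify at e1 e2 ⊢
      linear_combination (r : ℤ) * e1 + 2 * e2

end UpperBound
/-- zero forcing number of the Hamming graph H(n,q). -/
theorem hamming_zf_eq (n q : ℕ) (hn : 1 ≤ n) (hq : 2 ≤ q) :
    zeroForcingNumber (hammingGraph n q) = (q ^ n + (q - 2) ^ n) / 2 := by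
  classical
  obtain ⟨r, rfl⟩ : ∃ r, q = r + 2 := ⟨q - 2, by omega⟩
  have hq2 : r + 2 - 2 = r := by omega
  rw [hq2]
  obtain ⟨L, hadj, hpw, hdisj, hlen⟩ := witness_exists r n
  set B : Finset (Fin n → Fin (r+2)) := Finset.univ \ (L.map Prod.snd).toFinset with hB
  have hUlnd : (L.map Prod.snd).Nodup := by
    rw [List.Nodup, List.pairwise_map]
    refine hpw.imp_of_mem ?_
    intro p p' hp hp' hR heq
    exact hR (mem_closedNbhd.2 (Or.inl (heq ▸ hadj p hp)))
  have hlenle : L.length ≤ (r+2)^n := by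
    generalize hA : (r+2)^n = A at hlen
    omega
  have hBcard : B.card + L.length = (r+2)^n := by
    rw [hB, Finset.card_sdiff_of_subset (Finset.subset_univ _), Finset.card_univ, Fintype.card_fun,
      Fintype.card_fin, Fintype.card_fin, List.card_toFinset, hUlnd.dedup, List.length_map]
    generalize hA : (r+2)^n = A at hlenle ⊢
    omega
  have hfor : IsZeroForcingSet (hammingGraph n (r+2)) (↑B : Set (Fin n → Fin (r+2))) := by
    have h1 := forces_of_witness (hammingGraph n (r+2)) L hadj hpw hdisj
    have hset : (↑B : Set (Fin n → Fin (r+2))) = {v | ∀ p ∈ L, v ≠ p.2} := by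
      ext v
      simp only [hB, Finset.coe_sdiff, Set.mem_diff, Finset.coe_univ, Set.mem_univ, true_and,
        Finset.mem_coe, List.mem_toFinset, List.mem_map, Set.mem_setOf_eq, not_exists]
      constructor
      · intro h p hp heq
        exact h p ⟨hp, heq.symm⟩
      · rintro h p ⟨hp, heq⟩
        exact h p hp heq.symm
    rw [hset]
    exact h1
  have hmem : B.card ∈ {m | ∃ B' : Finset (Fin n → Fin (r+2)), B'.card = m ∧
      IsZeroForcingSet (hammingGraph n (r+2)) (↑B' : Set (Fin n → Fin (r+2)))} :=
    ⟨B, rfl, hfor⟩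
  have hBtarget : B.card = ((r+2)^n + r^n) / 2 := by
    generalize hA : (r+2)^n = A at hlen hBcard ⊢
    generalize hC : r^n = C at hlen ⊢
    omega
  apply le_antisymm
  · rw [← hBtarget]
    exact Nat.sInf_le hmem
  · refine le_csInf ⟨B.card, hmem⟩ ?_
    rintro m ⟨B', hc, hf⟩
    have hlb := hamming_lower_bound B' hf
    subst hc
    generalize hA : (r+2)^n = A at hlb ⊢
    generalize hC : r^n = C at hlb ⊢
    omega

end ZFPaper
end

section
/- Let q ≥ 2 be an even integer, and define the q^n × q^n matrix B_n over F_2 by B_n = Σ_{i=1}^n I^{⊗(i−1)} ⊗ J ⊗ I^{⊗(n−i)}, where I is the q × q identity and J is the q × q all-ones matrix. Then B_n^2 = 0 over F_2, and the nullity of B_n over F_2 is at least (q^n + (q−2)^n)/2. -/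
open Finset

namespace ZFPaper

variable {V : Type*}

/-- The matrix B_n = Σᵢ I^{⊗(i−1)} ⊗ J ⊗ I^{⊗(n−i)} over F₂, written entrywise: its
(x,y) entry is Σᵢ Πⱼ≠ᵢ δ_{xⱼ,yⱼ} (the J-factor contributes 1 in every entry). -/
def hammingMatrix (n q : ℕ) : Matrix (Fin n → Fin q) (Fin n → Fin q) (ZMod 2) :=
  fun x y => ∑ i : Fin n, ∏ j ∈ Finset.univ.erase i, (if x j = y j then 1 else 0)

section Statement17Aux

variable {n q : ℕ}

private def dl {q : ℕ} (a b : Fin q) : ZMod 2 := if a = b then 1 else 0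

private lemma sum_dl_right (a : Fin q) : ∑ b, dl a b = 1 := by simp [dl]

private lemma sum_dl_left (b : Fin q) : ∑ a, dl a b = 1 := by simp [dl]

private lemma sum_dl_mul (a c : Fin q) : ∑ b, dl a b * dl b c = dl a c := by
  simp [dl, ite_mul]

private lemma prod_erase_eq (j : Fin n) (g : Fin n → ZMod 2) :
    ∏ k ∈ Finset.univ.erase j, g k = ∏ k, (if k = j then 1 else g k) := by
  rw [← Finset.mul_prod_erase Finset.univ (fun k => if k = j then 1 else g k)
    (Finset.mem_univ j), if_pos rfl, one_mul]
  exact Finset.prod_congr rfl fun k hk => (if_neg (Finset.ne_of_mem_erase hk)).symm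

private lemma hm_apply (x y : Fin n → Fin q) :
    hammingMatrix n q x y = ∑ j, ∏ i, (if i = j then 1 else dl (x i) (y i)) := by
  unfold hammingMatrix
  exact Finset.sum_congr rfl fun j _ => prod_erase_eq j _

private lemma sum_prod_mul (P Q : Fin n → Fin q → ZMod 2) :
    ∑ y : Fin n → Fin q, (∏ i, P i (y i)) * (∏ i, Q i (y i)) = ∏ i, ∑ b, P i b * Q i b := by
  simp_rw [← Finset.prod_mul_distrib]
  exact (Fintype.prod_sum fun i b => P i b * Q i b).symm

private lemma hm_mul_hm (hqe : Even q) :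
    hammingMatrix n q * hammingMatrix n q = 0 := by
  have hq2 : (q : ZMod 2) = 0 := (ZMod.natCast_eq_zero_iff _ _).mpr hqe.two_dvd
  ext x z
  rw [Matrix.mul_apply, Matrix.zero_apply]
  simp_rw [hm_apply, Finset.sum_mul_sum]
  rw [Finset.sum_comm]
  set F : Fin n → Fin n → Fin n → ZMod 2 := fun i j j' =>
    if i = j then (if i = j' then (q : ZMod 2) else 1)
    else (if i = j' then 1 else dl (x i) (z i)) with hF
  have key : ∀ j j' : Fin n,
      (∑ y : Fin n → Fin q, (∏ i, (if i = j then 1 else dl (x i) (y i))) *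
        (∏ i, (if i = j' then 1 else dl (y i) (z i)))) = ∏ i, F i j j' := by
    intro j j'
    rw [sum_prod_mul (fun i b => if i = j then 1 else dl (x i) b)
      (fun i b => if i = j' then 1 else dl b (z i))]
    refine Finset.prod_congr rfl fun i _ => ?_
    by_cases h1 : i = j <;> by_cases h2 : i = j' <;>
      simp [hF, h1, h2, sum_dl_right, sum_dl_left, sum_dl_mul, Finset.card_univ]
  have step : ∀ j : Fin n,
      (∑ y : Fin n → Fin q, ∑ j' : Fin n,
        (∏ i, (if i = j then 1 else dl (x i) (y i))) *
        (∏ i, (if i = j' then 1 else dl (y i) (z i))))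
      = ∑ j' : Fin n, ∏ i, F i j j' := by
    intro j
    rw [Finset.sum_comm]
    exact Finset.sum_congr rfl fun j' _ => key j j'
  rw [Finset.sum_congr rfl fun j _ => step j]
  have main : ∑ p : Fin n × Fin n, ∏ i, F i p.1 p.2 = 0 := by
    refine Finset.sum_ninvolution Prod.swap ?_ ?_ (fun p => Finset.mem_univ _) ?_
    · intro p
      have hsymm : (∏ i, F i p.1 p.2) = ∏ i, F i p.2 p.1 := by
        refine Finset.prod_congr rfl fun i _ => ?_
        by_cases h1 : i = p.1 <;> by_cases h2 : i = p.2 <;> simp [hF, h1, h2]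
      rw [Prod.fst_swap, Prod.snd_swap, ← hsymm, CharTwo.add_self_eq_zero]
    · intro p hf hsw
      apply hf
      have hp : p.1 = p.2 := congrArg Prod.snd hsw
      refine Finset.prod_eq_zero (Finset.mem_univ p.1) ?_
      simp [hF, hp, hq2]
    · intro p; exact Prod.swap_swap p
  simpa [Fintype.sum_prod_type] using main

private def piM (n q : ℕ) (l : Fin q) : Matrix (Fin n → Fin q) (Fin n → Fin q) (ZMod 2) :=
  fun x y => ∏ i, (dl (x i) (y i) + dl (y i) l)

private def uVec (n q : ℕ) (l : Fin q) (w : Fin n → Fin q) : (Fin n → Fin q) → ZMod 2 :=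
  fun x => ∏ i, (dl (x i) (w i) + dl (x i) l)

private def gVec (n q : ℕ) (l : Fin q) (w : Fin n → Fin q) : (Fin n → Fin q) → ZMod 2 :=
  fun x => ∏ i, (dl (x i) (w i) + dl (x i) l + 1)

private lemma piM_mul_hm (l : Fin q) : piM n q l * hammingMatrix n q = 0 := by
  ext x z
  rw [Matrix.mul_apply, Matrix.zero_apply]
  simp_rw [hm_apply, piM, Finset.mul_sum]
  rw [Finset.sum_comm]
  refine Finset.sum_eq_zero fun j _ => ?_
  rw [sum_prod_mul (fun i b => dl (x i) b + dl b l)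
    (fun i b => if i = j then 1 else dl b (z i))]
  refine Finset.prod_eq_zero (Finset.mem_univ j) ?_
  have h1 : ∀ b : Fin q, (dl (x j) b + dl b l) * (if j = j then (1 : ZMod 2) else dl b (z j))
      = dl (x j) b + dl b l := fun b => by rw [if_pos rfl, mul_one]
  rw [Finset.sum_congr rfl fun b _ => h1 b, Finset.sum_add_distrib, sum_dl_right, sum_dl_left]
  decide

private lemma hm_mulVec_uVec (l : Fin q) (w : Fin n → Fin q) :
    (hammingMatrix n q).mulVec (uVec n q l w) = 0 := by
  funext x
  simp only [Matrix.mulVec, dotProduct, uVec, Pi.zero_apply]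
  simp_rw [hm_apply, Finset.sum_mul]
  rw [Finset.sum_comm]
  refine Finset.sum_eq_zero fun j _ => ?_
  rw [sum_prod_mul (fun i b => if i = j then 1 else dl (x i) b)
    (fun i b => dl b (w i) + dl b l)]
  refine Finset.prod_eq_zero (Finset.mem_univ j) ?_
  have h1 : ∀ b : Fin q, (if j = j then (1 : ZMod 2) else dl (x j) b) * (dl b (w j) + dl b l)
      = dl b (w j) + dl b l := fun b => by rw [if_pos rfl, one_mul]
  rw [Finset.sum_congr rfl fun b _ => h1 b, Finset.sum_add_distrib, sum_dl_left, sum_dl_left]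
  decide

private lemma piM_mulVec_uVec (l : Fin q) (w : Fin n → Fin q) (hw : ∀ i, w i ≠ l) :
    (piM n q l).mulVec (uVec n q l w) = gVec n q l w := by
  funext x
  simp only [Matrix.mulVec, dotProduct, piM, uVec, gVec]
  rw [sum_prod_mul (fun i b => dl (x i) b + dl b l)
    (fun i b => dl b (w i) + dl b l)]
  refine Finset.prod_congr rfl fun i _ => ?_
  have expand : ∀ b : Fin q, (dl (x i) b + dl b l) * (dl b (w i) + dl b l)
      = dl (x i) b * dl b (w i) + dl (x i) b * dl b l
        + (dl l b * dl b (w i) + dl b l * dl b l) := by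
    intro b
    have : dl b l = dl l b := by unfold dl; simp [eq_comm]
    rw [this]; ring
  rw [Finset.sum_congr rfl fun b _ => expand b]
  have hll : ∀ b : Fin q, dl b l * dl b l = dl b l := by
    intro b; unfold dl; split <;> simp
  simp_rw [Finset.sum_add_distrib, sum_dl_mul, hll, sum_dl_left]
  have : dl l (w i) = 0 := by unfold dl; exact if_neg fun h => hw i h.symm
  rw [this]
  ring

private lemma gVec_indep {z l : Fin q} (hzl : z ≠ l) :
    LinearIndependent (ZMod 2)
      (fun w : Fin n → {a : Fin q // a ≠ z ∧ a ≠ l} =>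
        gVec n q l (fun i => (w i : Fin q))) := by
  rw [Fintype.linearIndependent_iff]
  intro c hc w₀
  have E : ∑ y ∈ Fintype.piFinset (fun i => ({(w₀ i : Fin q), z} : Finset (Fin q))),
      (∑ w, c w • gVec n q l (fun i => (w i : Fin q))) y = 0 := by
    rw [hc]; simp
  simp_rw [Finset.sum_apply, Pi.smul_apply, smul_eq_mul] at E
  rw [Finset.sum_comm] at E
  have inner : ∀ w : Fin n → {a : Fin q // a ≠ z ∧ a ≠ l},
      (∑ y ∈ Fintype.piFinset (fun i => ({(w₀ i : Fin q), z} : Finset (Fin q))),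
        gVec n q l (fun i => (w i : Fin q)) y)
      = if w₀ = w then 1 else 0 := by
    intro w
    simp only [gVec]
    rw [← Finset.prod_univ_sum (fun i => ({(w₀ i : Fin q), z} : Finset (Fin q)))
      (fun i b => dl b ((w i : Fin q)) + dl b l + 1)]
    have hfac : ∀ i, (∑ b ∈ ({(w₀ i : Fin q), z} : Finset (Fin q)),
        (dl b ((w i : Fin q)) + dl b l + 1)) = dl ((w₀ i : Fin q)) ((w i : Fin q)) := by
      intro i
      rw [Finset.sum_pair (w₀ i).2.1]
      have h1 : dl ((w₀ i : Fin q)) l = 0 := if_neg (w₀ i).2.2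
      have h2 : dl z ((w i : Fin q)) = 0 := if_neg fun h => (w i).2.1 h.symm
      have h3 : dl z l = 0 := if_neg hzl
      rw [h1, h2, h3]
      have harith : ∀ t : ZMod 2, (t + 0 + 1) + (0 + 0 + 1) = t := by decide
      exact harith _
    rw [Finset.prod_congr rfl fun i _ => hfac i]
    unfold dl
    rw [Fintype.prod_boole]
    have hiff : (∀ i, (w₀ i : Fin q) = (w i : Fin q)) ↔ w₀ = w := by
      constructor
      · intro h; funext i; exact Subtype.ext (h i)
      · intro h i; rw [h]
    simp only [hiff]
  rw [Finset.sum_congr rfl fun w _ => by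
    rw [← Finset.mul_sum, inner w]] at E
  simpa using E

end Statement17Aux

/-- for q even, B_n² = 0 and the nullity of B_n over F₂ is at least
(q^n + (q−2)^n)/2. -/
theorem hammingMatrix_even (n q : ℕ) (hq : 2 ≤ q) (hqe : Even q) :
    hammingMatrix n q * hammingMatrix n q = 0 ∧
    (q ^ n + (q - 2) ^ n) / 2 ≤
      Module.finrank (ZMod 2) ↥(LinearMap.ker (Matrix.toLin' (hammingMatrix n q))) := by
  refine ⟨hm_mul_hm hqe, ?_⟩
  classical
  have hq0 : 0 < q := by omega
  set z : Fin q := ⟨0, hq0⟩ with hz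
  set l : Fin q := ⟨1, by omega⟩ with hl
  have hzl : z ≠ l := by simp [hz, hl, Fin.ext_iff]
  set fB := Matrix.toLin' (hammingMatrix n q) with hfB
  set fP := Matrix.toLin' (piM n q l) with hfP
  set u : (Fin n → {a : Fin q // a ≠ z ∧ a ≠ l}) → ((Fin n → Fin q) → ZMod 2) :=
    fun w => uVec n q l (fun i => (w i : Fin q)) with hu
  have hPu : ∀ w, fP (u w) = gVec n q l (fun i => (w i : Fin q)) := by
    intro w
    rw [hfP, hu, Matrix.toLin'_apply]
    exact piM_mulVec_uVec l _ (fun i => (w i).2.2)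
  have hgind := gVec_indep (n := n) hzl
  have huind : LinearIndependent (ZMod 2) u := by
    refine LinearIndependent.of_comp fP ?_
    have : fP ∘ u = fun w => gVec n q l (fun i => ((w i : Fin q))) := funext hPu
    rw [this]
    exact hgind
  set U := Submodule.span (ZMod 2) (Set.range u) with hU
  have hcard : Fintype.card {a : Fin q // a ≠ z ∧ a ≠ l} = q - 2 := by
    rw [Fintype.card_subtype]
    have hfilter : Finset.univ.filter (fun a : Fin q => a ≠ z ∧ a ≠ l)
        = Finset.univ \ {z, l} := by
      ext a
      simp [not_or]
    rw [hfilter, Finset.card_sdiff_of_subset (Finset.subset_univ _), Finset.card_univ, Fintype.card_fin,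
      Finset.card_pair hzl]
  have hcardι : Fintype.card (Fin n → {a : Fin q // a ≠ z ∧ a ≠ l}) = (q - 2) ^ n := by
    rw [Fintype.card_fun, hcard, Fintype.card_fin]
  have hUrank : Module.finrank (ZMod 2) U = (q - 2) ^ n := by
    rw [hU, finrank_span_eq_card huind, hcardι]
  have hUker : U ≤ LinearMap.ker fB := by
    rw [hU, Submodule.span_le]
    rintro _ ⟨w, rfl⟩
    rw [SetLike.mem_coe, LinearMap.mem_ker, hfB, hu, Matrix.toLin'_apply]
    exact hm_mulVec_uVec l _
  have hRker : LinearMap.range fB ≤ LinearMap.ker fB := by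
    rw [LinearMap.range_le_ker_iff, hfB, ← Matrix.toLin'_mul, hm_mul_hm hqe]
    exact map_zero _
  have hPB : fP.comp fB = 0 := by
    rw [hfP, hfB, ← Matrix.toLin'_mul, piM_mul_hm]
    exact map_zero _
  have hdisj : U ⊓ LinearMap.range fB = ⊥ := by
    rw [eq_bot_iff]
    rintro x ⟨hxU, hxR⟩
    obtain ⟨y, hy⟩ := hxR
    have hPx : fP x = 0 := by
      rw [← hy, ← LinearMap.comp_apply, hPB, LinearMap.zero_apply]
    rw [hU] at hxU
    obtain ⟨c, hcx⟩ := (Submodule.mem_span_range_iff_exists_fun _).mp hxU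
    have h0 : ∑ w, c w • gVec n q l (fun i => ((w i : Fin q))) = 0 := by
      calc ∑ w, c w • gVec n q l (fun i => ((w i : Fin q)))
          = ∑ w, c w • fP (u w) := by
            exact Finset.sum_congr rfl fun w _ => by rw [hPu w]
        _ = fP (∑ w, c w • u w) := by rw [map_sum]; simp_rw [map_smul]
        _ = fP x := by rw [hcx]
        _ = 0 := hPx
    have hc0 : ∀ w, c w = 0 := Fintype.linearIndependent_iff.mp hgind c h0
    have : x = 0 := by
      rw [← hcx]
      simp [hc0]
    simp [this]
  have hsup : Module.finrank (ZMod 2) ↥(U ⊔ LinearMap.range fB)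
      = (q - 2) ^ n + Module.finrank (ZMod 2) ↥(LinearMap.range fB) := by
    have := Submodule.finrank_sup_add_finrank_inf_eq U (LinearMap.range fB)
    rw [hdisj, finrank_bot, add_zero, hUrank] at this
    exact this
  have hmono : Module.finrank (ZMod 2) ↥(U ⊔ LinearMap.range fB)
      ≤ Module.finrank (ZMod 2) ↥(LinearMap.ker fB) :=
    Submodule.finrank_mono (sup_le hUker hRker)
  have hrn : Module.finrank (ZMod 2) ↥(LinearMap.range fB)
      + Module.finrank (ZMod 2) ↥(LinearMap.ker fB) = q ^ n := by
    rw [LinearMap.finrank_range_add_finrank_ker fB, Module.finrank_pi, Fintype.card_fun,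
      Fintype.card_fin, Fintype.card_fin]
  omega


end ZFPaper
end
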